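/- Version-space closure under singleton-forced pseudo-labels: suppose at pool point u every class c' ≠ c has UB_{c'}(u) < 0, and that for every head f̃ ∈ F(S) the argmax of the logits at z_u is nonempty. Then adding u to S with label c and center bound m̲_u := 0 leaves the version space unchanged: F(S ∪ {u}) = F(S). -/

import Mathlib

/-!
Every head `f ∈ F(S)` has some logit maximizer `k` at `z_u`, and a maximizer has nonnegative
margin. For `k ≠ c` this is impossible: the center constraint at any `i ∈ S` with `y_i ≠ k`
forces `M̃_k(z_i) ≤ -m̲_i`, so by the Lipschitz bound `M̃_k(z_u) ≤ UB_k(u) < 0`. Hence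
`k = c`, and the new constraint `M̃_c(z_u) ≥ 0` holds automatically.
-/

open Finset

/-- One-vs-rest margin `M_c(z) = f_c(z) - max_{k ≠ c} f_k(z)` of a logit vector. -/
noncomputable def margin {C : ℕ} (hC : 2 ≤ C) (f : Fin C → ℝ) (c : Fin C) : ℝ :=
  f c - (Finset.univ.erase c).sup'
    (by
      rw [← Finset.card_pos, Finset.card_erase_of_mem (Finset.mem_univ c),
        Finset.card_univ, Fintype.card_fin]
      omega) f

/-- The Lipschitz-consistent version space `F(S)`: heads whose margins are
`L_c`-Lipschitz and satisfy the center constraints on the labeled set `S`. -/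
def VersionSpace {m C : ℕ} (hC : 2 ≤ C) {ι : Type*} (S : Finset ι)
    (z : ι → EuclideanSpace ℝ (Fin m)) (y : ι → Fin C) (mlb : ι → ℝ)
    (L : Fin C → ℝ) : Set (EuclideanSpace ℝ (Fin m) → Fin C → ℝ) :=
  {f | (∀ c z₁ z₂, |margin hC (f z₁) c - margin hC (f z₂) c| ≤ L c * ‖z₁ - z₂‖) ∧
       (∀ i ∈ S, mlb i ≤ margin hC (f (z i)) (y i))}

section Margin

variable {C : ℕ} (hC : 2 ≤ C) (f : Fin C → ℝ)

lemma margin_nonneg_of_forall_le {k : Fin C} (hk : ∀ j, f j ≤ f k) : 0 ≤ margin hC f k := by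
  rw [margin, sub_nonneg]
  exact sup'_le _ _ fun j _ => hk j

lemma margin_le_sub_of_ne {c k : Fin C} (hkc : k ≠ c) : margin hC f c ≤ f c - f k := by
  rw [margin]
  linarith [le_sup' f (mem_erase.2 ⟨hkc, mem_univ k⟩)]

lemma margin_add_margin_nonpos {c k : Fin C} (hkc : k ≠ c) :
    margin hC f k + margin hC f c ≤ 0 := by
  linarith [margin_le_sub_of_ne hC f hkc, margin_le_sub_of_ne hC f hkc.symm]

end Margin

section VersionSpace

variable {m C : ℕ} (hC : 2 ≤ C) {ι : Type*} (S : Finset ι)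
  (z : ι → EuclideanSpace ℝ (Fin m)) (y : ι → Fin C) (mlb : ι → ℝ) (L : Fin C → ℝ)

/-- `UB_k(x)`; it is `⊤` when every point of `S` has label `k`. -/
noncomputable def marginUpperEnvelope (k : Fin C) (x : EuclideanSpace ℝ (Fin m)) : EReal :=
  (S.filter fun i => y i ≠ k).inf fun i => ((-mlb i + L k * ‖x - z i‖ : ℝ) : EReal)

lemma versionSpace_insert [DecidableEq ι] (u : ι) :
    VersionSpace hC (insert u S) z y mlb L =
      VersionSpace hC S z y mlb L ∩ {f | mlb u ≤ margin hC (f (z u)) (y u)} := by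
  ext f
  simp only [VersionSpace, Set.mem_inter_iff, Set.mem_ofPred_eq, forall_mem_insert]
  tauto

variable {hC S z y mlb L}

lemma margin_le_of_mem_versionSpace {f : EuclideanSpace ℝ (Fin m) → Fin C → ℝ}
    (hf : f ∈ VersionSpace hC S z y mlb L) {k : Fin C} {i : ι} (hi : i ∈ S) (hik : y i ≠ k)
    (x : EuclideanSpace ℝ (Fin m)) :
    margin hC (f x) k ≤ -mlb i + L k * ‖x - z i‖ := by
  have hcenter := hf.2 i hi
  have hother := margin_add_margin_nonpos hC (f (z i)) hik.symm
  have hlip := (abs_le.1 (hf.1 k x (z i))).2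
  linarith

lemma margin_le_marginUpperEnvelope {f : EuclideanSpace ℝ (Fin m) → Fin C → ℝ}
    (hf : f ∈ VersionSpace hC S z y mlb L) (k : Fin C) (x : EuclideanSpace ℝ (Fin m)) :
    (margin hC (f x) k : EReal) ≤ marginUpperEnvelope S z y mlb L k x :=
  Finset.le_inf fun _ hi =>
    EReal.coe_le_coe_iff.2 <|
      margin_le_of_mem_versionSpace hf (mem_filter.1 hi).1 (mem_filter.1 hi).2 x

end VersionSpace

theorem version_space_closure_singleton_forcing_general
    {m C : ℕ} (hC : 2 ≤ C) {ι : Type*} [DecidableEq ι]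
    (S : Finset ι)
    (z : ι → EuclideanSpace ℝ (Fin m))
    (y : ι → Fin C)
    (mlb : ι → ℝ)
    (L : Fin C → ℝ)
    (u : ι)
    (c : Fin C) (hyu : y u = c) (hmu : mlb u = 0)
    (hsingleton : ∀ c' ≠ c,
        ((S.filter fun i => y i ≠ c').inf
          fun i => ((-mlb i + L c' * ‖z u - z i‖ : ℝ) : EReal)) < 0)
    (hargmax : ∀ f ∈ VersionSpace hC S z y mlb L,
        ∃ k : Fin C, ∀ j, f (z u) j ≤ f (z u) k) :
    VersionSpace hC (insert u S) z y mlb L = VersionSpace hC S z y mlb L := by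
  rw [versionSpace_insert, Set.inter_eq_left]
  intro f hf
  obtain ⟨k, hk⟩ := hargmax f hf
  have hk_nonneg := margin_nonneg_of_forall_le hC (f (z u)) hk
  obtain rfl : k = c := by
    by_contra hkc
    have hlt := (margin_le_marginUpperEnvelope hf k (z u)).trans_lt (hsingleton k hkc)
    exact hk_nonneg.not_gt (EReal.coe_lt_coe_iff.1 hlt)
  simpa only [Set.mem_ofPred_eq, hmu, hyu] using hk_nonneg

/-- Version-space closure under singleton-forced pseudo-labels: if every class
`c' ≠ c` has strictly negative upper envelope at pool point `u`, and every head
in `F(S)` has a nonempty logit argmax at `z_u`, then adding `u` with label `c`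
and center bound `0` leaves the version space unchanged. -/
theorem version_space_closure_singleton_forcing
    {m C : ℕ} (hC : 2 ≤ C) {ι : Type*} [Fintype ι] [DecidableEq ι]
    (S : Finset ι)
    (z : ι → EuclideanSpace ℝ (Fin m))
    (y : ι → Fin C)
    (mlb : ι → ℝ) (hmlb : ∀ i, 0 ≤ mlb i)
    (L : Fin C → ℝ)
    (u : ι) (hu : u ∉ S)
    (c : Fin C) (hyu : y u = c) (hmu : mlb u = 0)
    (hsingleton : ∀ c' ≠ c,
        ((S.filter fun i => y i ≠ c').inf
          fun i => ((-mlb i + L c' * ‖z u - z i‖ : ℝ) : EReal)) < 0)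
    (hargmax : ∀ f ∈ VersionSpace hC S z y mlb L,
        ∃ k : Fin C, ∀ j, f (z u) j ≤ f (z u) k) :
    VersionSpace hC (insert u S) z y mlb L = VersionSpace hC S z y mlb L :=
  version_space_closure_singleton_forcing_general hC S z y mlb L u c hyu hmu hsingleton hargmax
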